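/- Let R be an integral domain and x,y,r,s ∈ R. If M₁ and M₂ are matroids on the same finite ground set E with T̂_{M₁}(x,y,r,s) = T̂_{M₂}(x,y,r,s) as elements of R[t_e : e∈E], and if M₁ ≠ M₂, then either r = s or (x−1)(y−1) = 1. -/

import Mathlib

open Finset MvPolynomial

/-- A matroid on a finite ground set `E`, presented by its rank function. -/
structure FinMatroid (α : Type) [DecidableEq α] where
  E : Finset α
  rk : Finset α → ℕ
  rk_empty : rk ∅ = 0
  rk_le_card : ∀ S : Finset α, rk S ≤ S.card
  rk_mono : ∀ ⦃S T : Finset α⦄, S ⊆ T → rk S ≤ rk T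
  rk_submodular : ∀ S T : Finset α, rk (S ∪ T) + rk (S ∩ T) ≤ rk S + rk T

namespace FinMatroid

variable {α : Type} [DecidableEq α]

/-- The equivariant Tutte polynomial of `M`, evaluated at `x y r s : R` and `t : α → R`. -/
def eqTutte (M : FinMatroid α) {R : Type} [CommRing R] (x y r s : R) (t : α → R) : R :=
  ∑ S ∈ M.E.powerset,
    (x - 1) ^ (M.rk M.E - M.rk S) * (y - 1) ^ (S.card - M.rk S) *
      (∏ e ∈ S, (1 + r * t e)) * (∏ e ∈ M.E \ S, (1 + s * t e))

/-- The classical Tutte polynomial of `M`. -/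
def tutte (M : FinMatroid α) {R : Type} [CommRing R] (x y : R) : R :=
  ∑ S ∈ M.E.powerset,
    (x - 1) ^ (M.rk M.E - M.rk S) * (y - 1) ^ (S.card - M.rk S)

/-- `e` is a loop of `M`. -/
def IsLoop (M : FinMatroid α) (e : α) : Prop := M.rk {e} = 0

/-- `e` is a coloop of `M` : it belongs to every basis of `M`. -/
def IsColoop (M : FinMatroid α) (e : α) : Prop :=
  ∀ B ⊆ M.E, M.rk B = B.card → M.rk B = M.rk M.E → e ∈ B

end FinMatroid

/-!
Write `a = x - 1`, `b = y - 1` and `w_M(S) = a ^ (rk E - rk S) * b ^ (|S| - rk S)`. The coefficient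
of the squarefree monomial `∏_{e ∈ A} t_e` in `T̂_M` is `∑_S w_M(S) ∏_{e ∈ A} (r if e ∈ S else s)`.
This linear system is the `|E|`-fold tensor power of a `2 × 2` system of determinant `r - s`, so for
`r ≠ s` the polynomial determines every weight `w_M(S)`.

If moreover `ab ≠ 1`, the weights determine the rank function. Take `S` inclusion-minimal with
`rk_N S < rk_M S`: then `S` is `M`-independent, `rk_N S = |S| - 1`, and `S - e` is independent in
both matroids, so comparing the weights of `S - e` and `S` gives `a ^ k (1 - ab) = 0`, i.e. `a = 0`.
For `a = 0` only spanning sets have nonzero weight, and bases of `M` have weight `1`; so every basis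
of `M` spans `N` and, the ranks of `M` and `N` being equal by symmetry, is independent in `N`. A basis
of `M` containing `S` then makes `S` independent in `N`, which contradicts `rk_N S < |S|`.
-/

lemma sum_single_one_injective {α : Type*} :
    Function.Injective fun A : Finset α => ∑ e ∈ A, Finsupp.single e (1 : ℕ) := by
  intro A B h
  have h' := congrArg Finsupp.toMultiset h
  simp only [Finsupp.toMultiset_sum_single, one_nsmul] at h'
  exact val_inj.mp h'

section CommRing

variable {α : Type*} {R : Type*} [CommRing R]

lemma prod_one_add_C_mul_X (E : Finset α) (c : α → R) :
    ∏ e ∈ E, (1 + C (c e) * X e) =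
      ∑ A ∈ E.powerset, monomial (∑ e ∈ A, Finsupp.single e 1) (∏ e ∈ A, c e) := by
  rw [prod_one_add]
  refine sum_congr rfl fun A _ => ?_
  rw [prod_mul_distrib, ← map_prod, show ∏ e ∈ A, (X e : MvPolynomial α R) =
    monomial (∑ e ∈ A, Finsupp.single e 1) 1 from (monomial_sum_one A _).symm, C_mul_monomial,
    mul_one]

lemma coeff_sum_monomial_sum_single [DecidableEq α] {E A : Finset α} (hA : A ⊆ E)
    (c : Finset α → R) :
    coeff (∑ e ∈ A, Finsupp.single e 1)
      (∑ B ∈ E.powerset, monomial (∑ e ∈ B, Finsupp.single e 1) (c B)) = c A := by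
  rw [coeff_sum, sum_eq_single_of_mem A (mem_powerset.mpr hA), coeff_monomial, if_pos rfl]
  intro B _ hBA
  rw [coeff_monomial, if_neg (sum_single_one_injective.ne hBA)]

lemma eq_zero_of_sum_mul_prod_ite_eq_zero [DecidableEq α] [IsDomain R] {r s : R} (hrs : r ≠ s)
    (E : Finset α) (d : Finset α → R)
    (h : ∀ A ⊆ E, ∑ S ∈ E.powerset, d S * ∏ e ∈ A, (if e ∈ S then r else s) = 0) :
    ∀ S ⊆ E, d S = 0 := by
  induction E using Finset.induction_on generalizing d with
  | empty =>
    intro S hS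
    simpa [subset_empty.mp hS] using h ∅ subset_rfl
  | insert a E ha ih =>
    have hprod_insert : ∀ A ⊆ E, ∀ S : Finset α, ∏ e ∈ A, (if e ∈ insert a S then r else s) =
        ∏ e ∈ A, (if e ∈ S then r else s) := fun A hA S =>
      prod_congr rfl fun e he => by simp [ne_of_mem_of_not_mem (hA he) ha]
    -- The equations for `A ⊆ E` and for `insert a A` are the systems over `E` for the
    -- coefficient functions `d S + d (insert a S)` and `s * d S + r * d (insert a S)`.
    have h₀ := ih (fun S => d S + d (insert a S)) fun A hA => by
      have hA' := h A (hA.trans (subset_insert a E))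
      rw [sum_powerset_insert ha] at hA'
      simpa only [add_mul, sum_add_distrib, hprod_insert A hA] using hA'
    have h₁ := ih (fun S => s * d S + r * d (insert a S)) fun A hA => by
      have hA' := h (insert a A) (insert_subset_insert a hA)
      rw [sum_powerset_insert ha] at hA'
      have haA : a ∉ A := fun h => ha (hA h)
      simp only [add_mul, sum_add_distrib]
      convert hA' using 2 <;> refine sum_congr rfl fun S hS => ?_ <;> rw [prod_insert haA]
      · rw [if_neg fun h => ha (mem_powerset.mp hS h)]
        ring
      · rw [if_pos (mem_insert_self a S), hprod_insert A hA]
        ring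
    have hins : ∀ S ⊆ E, d (insert a S) = 0 := fun S hS => by
      have hrs' : (r - s) * d (insert a S) = 0 := by linear_combination h₁ S hS - s * h₀ S hS
      exact (mul_eq_zero.mp hrs').resolve_left (sub_ne_zero.mpr hrs)
    intro S hS
    by_cases haS : a ∈ S
    · rw [← insert_erase haS]
      exact hins _ (subset_insert_iff.mp hS)
    · have hSE : S ⊆ E := (subset_insert_iff_of_notMem haS).mp hS
      simpa [hins S hSE] using h₀ S hSE

lemma eq_zero_of_pow_succ_eq_of_pow_eq_mul [IsDomain R] {a b : R} (hab : a * b ≠ 1) {m n : ℕ}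
    (h₁ : a ^ (m + 1) = a ^ n) (h₂ : a ^ m = a ^ n * b) : a = 0 := by
  have h : a ^ n * (1 - a * b) = 0 := by linear_combination -h₁ + a * h₂
  rcases mul_eq_zero.mp h with h | h
  · exact eq_zero_of_pow_eq_zero h
  · exact absurd (sub_eq_zero.mp h).symm hab

end CommRing

namespace FinMatroid

variable {α : Type} [DecidableEq α] {M N : FinMatroid α}

def Indep (M : FinMatroid α) (I : Finset α) : Prop := M.rk I = I.card

def IsBase (M : FinMatroid α) (B : Finset α) : Prop := B ⊆ M.E ∧ M.Indep B ∧ M.rk B = M.rk M.E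

def weight (M : FinMatroid α) {R : Type} [CommRing R] (a b : R) (S : Finset α) : R :=
  a ^ (M.rk M.E - M.rk S) * b ^ (S.card - M.rk S)

lemma indep_empty (M : FinMatroid α) : M.Indep ∅ := by
  rw [Indep, M.rk_empty, card_empty]

lemma rk_insert_le (M : FinMatroid α) (e : α) (S : Finset α) :
    M.rk (insert e S) ≤ M.rk S + 1 := by
  have h := M.rk_submodular S {e}
  have h1 : M.rk {e} ≤ 1 := M.rk_le_card {e}
  rw [union_singleton] at h
  omega

lemma rk_union_le_rk_add_card (M : FinMatroid α) (S T : Finset α) :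
    M.rk (S ∪ T) ≤ M.rk S + T.card := by
  induction T using Finset.induction_on with
  | empty => simp
  | insert e T he ih =>
    rw [union_insert, card_insert_of_notMem he]
    have := M.rk_insert_le e (S ∪ T)
    omega

lemma Indep.subset {B S : Finset α} (hB : M.Indep B) (hSB : S ⊆ B) : M.Indep S := by
  have h := M.rk_union_le_rk_add_card S (B \ S)
  rw [union_sdiff_of_subset hSB, hB, card_sdiff_of_subset hSB] at h
  have := M.rk_le_card S
  have := card_le_card hSB
  unfold Indep
  omega

lemma Indep.exists_superset_indep_rk_eq {I S : Finset α} (hI : M.Indep I) (hIS : I ⊆ S) :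
    ∃ J, I ⊆ J ∧ J ⊆ S ∧ M.Indep J ∧ M.rk J = M.rk S := by
  induction S using Finset.strongInduction with
  | H S ih =>
  by_cases hSI : S ⊆ I
  · exact ⟨I, subset_rfl, hIS, hI, by rw [hIS.antisymm hSI]⟩
  obtain ⟨e, heS, heI⟩ := not_subset.mp hSI
  obtain ⟨J, hIJ, hJS, hJ, hJrk⟩ :=
    ih (S.erase e) (erase_ssubset heS) (subset_erase.mpr ⟨hIS, heI⟩)
  rcases (M.rk_mono (erase_subset e S)).eq_or_lt with hrk | hrk
  · exact ⟨J, hIJ, hJS.trans (erase_subset e S), hJ, hJrk.trans hrk⟩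
  have heJ : e ∉ J := fun h => notMem_erase e S (hJS h)
  have hsub := M.rk_submodular (insert e J) (S.erase e)
  rw [insert_union, union_eq_right.mpr hJS, insert_erase heS,
    insert_inter_of_notMem (notMem_erase e S), inter_eq_left.mpr hJS] at hsub
  have hS := M.rk_insert_le e (S.erase e)
  have hJe := M.rk_le_card (insert e J)
  rw [insert_erase heS] at hS
  rw [card_insert_of_notMem heJ] at hJe
  unfold Indep at hJ
  refine ⟨insert e J, hIJ.trans (subset_insert e J),
    insert_subset heS (hJS.trans (erase_subset e S)), ?_, by omega⟩
  rw [Indep, card_insert_of_notMem heJ]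
  omega

lemma exists_indep_subset_rk_eq (M : FinMatroid α) (S : Finset α) :
    ∃ J ⊆ S, M.Indep J ∧ M.rk J = M.rk S := by
  obtain ⟨J, -, hJS, hJ, hrk⟩ := M.indep_empty.exists_superset_indep_rk_eq (empty_subset S)
  exact ⟨J, hJS, hJ, hrk⟩

lemma Indep.exists_isBase_superset {I : Finset α} (hI : M.Indep I) (hIE : I ⊆ M.E) :
    ∃ B, I ⊆ B ∧ M.IsBase B := by
  obtain ⟨B, hIB, hBE, hB, hrk⟩ := hI.exists_superset_indep_rk_eq hIE
  exact ⟨B, hIB, hBE, hB, hrk⟩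

lemma exists_isBase (M : FinMatroid α) : ∃ B, M.IsBase B := by
  obtain ⟨B, -, hB⟩ := M.indep_empty.exists_isBase_superset (empty_subset M.E)
  exact ⟨B, hB⟩

section Weight

variable {R : Type} [CommRing R]

lemma IsBase.weight_eq_one {B : Finset α} (hB : M.IsBase B) (a b : R) : M.weight a b B = 1 := by
  obtain ⟨-, hB, hrk⟩ := hB
  unfold Indep at hB
  rw [weight, ← hrk, ← hB, Nat.sub_self, pow_zero, pow_zero, one_mul]

lemma rk_ground_le_of_weight_ne_zero {b : R} {S : Finset α} (h : M.weight 0 b S ≠ 0) :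
    M.rk M.E ≤ M.rk S := by
  by_contra hlt
  exact h (by rw [weight, zero_pow (by omega), zero_mul])

lemma rk_ground_le_of_weight_zero_eq [Nontrivial R] {b : R}
    (hw : ∀ T ⊆ M.E, M.weight 0 b T = N.weight 0 b T) : N.rk N.E ≤ M.rk M.E := by
  obtain ⟨B, hB⟩ := M.exists_isBase
  have hwB : N.weight 0 b B ≠ 0 := by
    rw [← hw B hB.1, hB.weight_eq_one]
    exact one_ne_zero
  have hN := rk_ground_le_of_weight_ne_zero hwB
  have := N.rk_le_card B
  obtain ⟨-, hB, hrk⟩ := hB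
  unfold Indep at hB
  omega

lemma IsBase.indep_of_weight_zero_eq [Nontrivial R] {b : R} (hE : M.E = N.E)
    (hw : ∀ T ⊆ M.E, M.weight 0 b T = N.weight 0 b T) {B : Finset α} (hB : M.IsBase B) :
    N.Indep B := by
  have hle := rk_ground_le_of_weight_zero_eq fun T hT => (hw T (hE ▸ hT)).symm
  have hwB : N.weight 0 b B ≠ 0 := by
    rw [← hw B hB.1, hB.weight_eq_one]
    exact one_ne_zero
  have hN := rk_ground_le_of_weight_ne_zero hwB
  have := N.rk_le_card B
  obtain ⟨-, hB, hrk⟩ := hB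
  unfold Indep at hB ⊢
  omega

variable {S : Finset α}

lemma indep_of_minimal_rk_lt (hlt : N.rk S < M.rk S) (hmin : ∀ T ⊂ S, M.rk T = N.rk T) :
    M.Indep S := by
  obtain ⟨J, hJS, hJ, hrk⟩ := M.exists_indep_subset_rk_eq S
  obtain rfl | hJS := hJS.eq_or_ssubset
  · exact hJ
  have := N.rk_mono hJS.subset
  have := hmin J hJS
  omega

lemma eq_zero_of_minimal_rk_lt [IsDomain R] {a b : R} (hab : a * b ≠ 1) (hE : M.E = N.E)
    (hw : ∀ T ⊆ M.E, M.weight a b T = N.weight a b T) (hSE : S ⊆ M.E)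
    (hlt : N.rk S < M.rk S) (hmin : ∀ T ⊂ S, M.rk T = N.rk T) : a = 0 := by
  obtain ⟨e, he⟩ : S.Nonempty := nonempty_iff_ne_empty.mpr fun h => by
    rw [h, M.rk_empty, N.rk_empty] at hlt
    omega
  have hS : M.Indep S := indep_of_minimal_rk_lt hlt hmin
  have hS' : M.Indep (S.erase e) := hS.subset (erase_subset e S)
  have hN' : N.rk (S.erase e) = M.rk (S.erase e) := (hmin _ (erase_ssubset he)).symm
  have hcard := card_erase_add_one he
  have hNS : N.rk S = (S.erase e).card := by
    have := N.rk_mono (erase_subset e S)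
    unfold Indep at hS hS'
    omega
  have hρ := M.rk_mono hSE
  have h₁ := hw _ ((erase_subset e S).trans hSE)
  have h₂ := hw S hSE
  unfold Indep at hS hS'
  rw [weight, weight, hN', hS', Nat.sub_self, pow_zero, mul_one, mul_one, ← hE] at h₁
  rw [weight, weight, hNS, hS, Nat.sub_self, pow_zero, mul_one, ← hcard, Nat.add_sub_cancel_left,
    pow_one, ← hE] at h₂
  refine eq_zero_of_pow_succ_eq_of_pow_eq_mul hab ?_ h₂
  rw [← h₁]
  congr 1
  omega

lemma rk_le_rk_of_minimal [IsDomain R] {a b : R} (hab : a * b ≠ 1) (hE : M.E = N.E)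
    (hw : ∀ T ⊆ M.E, M.weight a b T = N.weight a b T) (hSE : S ⊆ M.E)
    (hmin : ∀ T ⊂ S, M.rk T = N.rk T) : M.rk S ≤ N.rk S := by
  by_contra! hlt
  obtain rfl := eq_zero_of_minimal_rk_lt hab hE hw hSE hlt hmin
  have hS : M.Indep S := indep_of_minimal_rk_lt hlt hmin
  obtain ⟨B, hSB, hB⟩ := hS.exists_isBase_superset hSE
  have hNS : N.Indep S := (hB.indep_of_weight_zero_eq hE hw).subset hSB
  unfold Indep at hS hNS
  omega

theorem rk_eq_of_weight_eq [IsDomain R] {a b : R} (hab : a * b ≠ 1) (hE : M.E = N.E)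
    (hw : ∀ T ⊆ M.E, M.weight a b T = N.weight a b T) : ∀ T ⊆ M.E, M.rk T = N.rk T := by
  by_contra! ⟨T, hTE, hT⟩
  obtain ⟨S, hST, hS⟩ := exists_minimal_le_of_wellFoundedLT (fun S => M.rk S ≠ N.rk S) T hT
  have hSE : S ⊆ M.E := hST.trans hTE
  have hmin : ∀ U ⊂ S, M.rk U = N.rk U := fun U hU => not_not.mp (hS.not_prop_of_lt hU)
  refine hS.prop (le_antisymm (rk_le_rk_of_minimal hab hE hw hSE hmin) ?_)
  exact rk_le_rk_of_minimal hab hE.symm (fun U hU => (hw U (hE ▸ hU)).symm) (hE ▸ hSE)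
    fun U hU => (hmin U hU).symm

end Weight

lemma eqTutte_C_X (M : FinMatroid α) {R : Type} [CommRing R] (x y r s : R) :
    M.eqTutte (C x) (C y) (C r) (C s) (X : α → MvPolynomial α R) =
      ∑ A ∈ M.E.powerset, monomial (∑ e ∈ A, Finsupp.single e 1)
        (∑ S ∈ M.E.powerset, M.weight (x - 1) (y - 1) S * ∏ e ∈ A, if e ∈ S then r else s) := by
  have hterm : ∀ S ∈ M.E.powerset,
      (C x - 1) ^ (M.rk M.E - M.rk S) * (C y - 1) ^ (S.card - M.rk S) *
        (∏ e ∈ S, (1 + C r * X e)) * (∏ e ∈ M.E \ S, (1 + C s * X e)) =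
      ∑ A ∈ M.E.powerset, monomial (∑ e ∈ A, Finsupp.single e 1)
        (M.weight (x - 1) (y - 1) S * ∏ e ∈ A, if e ∈ S then r else s) := by
    intro S hS
    have hprod : (∏ e ∈ S, (1 + C r * X e)) * ∏ e ∈ M.E \ S, (1 + C s * X e) =
        ∏ e ∈ M.E, (1 + C (if e ∈ S then r else s) * (X e : MvPolynomial α R)) := by
      calc _ = ∏ e ∈ M.E, S.piecewise (fun e => 1 + C r * X e) (fun e => 1 + C s * X e) e := by
            rw [prod_piecewise, inter_eq_right.mpr (mem_powerset.mp hS)]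
        _ = _ := prod_congr rfl fun e _ => by by_cases he : e ∈ S <;> simp [he]
    rw [mul_assoc, hprod, prod_one_add_C_mul_X, mul_sum]
    refine sum_congr rfl fun A _ => ?_
    rw [weight, ← C_mul_monomial]
    simp only [map_mul, map_pow, map_sub, map_one]
  rw [eqTutte, sum_congr rfl hterm, sum_comm]
  exact sum_congr rfl fun A _ => (map_sum _ _ _).symm

lemma coeff_eqTutte_C_X (M : FinMatroid α) {R : Type} [CommRing R] (x y r s : R) {A : Finset α}
    (hA : A ⊆ M.E) :
    coeff (∑ e ∈ A, Finsupp.single e 1)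
        (M.eqTutte (C x) (C y) (C r) (C s) (X : α → MvPolynomial α R)) =
      ∑ S ∈ M.E.powerset, M.weight (x - 1) (y - 1) S * ∏ e ∈ A, if e ∈ S then r else s := by
  rw [eqTutte_C_X, coeff_sum_monomial_sum_single hA]

end FinMatroid

/-- If two different matroids on the same ground set have the same
equivariant Tutte polynomial evaluated at x,y,r,s in an integral domain R
(as elements of R[t_e : e∈E]), then r = s or (x−1)(y−1) = 1. -/
theorem eqTutte_evaluation_uniqueness {α : Type} [DecidableEq α]
    (M₁ M₂ : FinMatroid α) (hE : M₁.E = M₂.E)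
    {R : Type} [CommRing R] [IsDomain R] (x y r s : R)
    (heq : M₁.eqTutte (R := MvPolynomial α R) (MvPolynomial.C x) (MvPolynomial.C y)
          (MvPolynomial.C r) (MvPolynomial.C s) MvPolynomial.X
        = M₂.eqTutte (MvPolynomial.C x) (MvPolynomial.C y)
          (MvPolynomial.C r) (MvPolynomial.C s) MvPolynomial.X)
    (hne : ∃ S ⊆ M₁.E, M₁.rk S ≠ M₂.rk S) :
    r = s ∨ (x - 1) * (y - 1) = 1 := by
  by_contra! ⟨hrs, hab⟩
  have hweight : ∀ T ⊆ M₁.E, M₁.weight (x - 1) (y - 1) T = M₂.weight (x - 1) (y - 1) T := by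
    refine fun T hT => sub_eq_zero.mp (eq_zero_of_sum_mul_prod_ite_eq_zero hrs M₁.E
      (fun T => M₁.weight (x - 1) (y - 1) T - M₂.weight (x - 1) (y - 1) T) (fun A hA => ?_) T hT)
    have hcoeff := congrArg (coeff (∑ e ∈ A, Finsupp.single e 1)) heq
    rw [M₁.coeff_eqTutte_C_X x y r s hA, M₂.coeff_eqTutte_C_X x y r s (hE ▸ hA), ← hE] at hcoeff
    simp only [sub_mul, sum_sub_distrib, hcoeff, sub_self]
  obtain ⟨S, hSE, hS⟩ := hne
  exact hS (FinMatroid.rk_eq_of_weight_eq hab hE hweight S hSE)
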